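/- Let ν₁ ≥ |ν₃| be integers, and for 0 ≤ l ≤ ν₁ − ν₃, 0 ≤ m ≤ ν₁ + ν₃ with l + m ≤ ν₁, define d^{l,m} := (1/2)[(ν₁−ν₃−l)l + (ν₁+ν₃−m)m + ν₁ − |ν₃| − |ν₁−l−m| + |ν₃+l−m| + Σ_{i=1}^{l}(|ν₁−i+1| − |ν₃+l−i+1|) + Σ_{j=1}^{m}(|ν₁−j+1| − |ν₃−j|)]. Then: (a) if ν₃ + l − m ≥ 0 and ν₃ − m ≤ 0 then d^{l,m} − d^{l+1,m−1} = 2(ν₃+l−m)+1; (b) if ν₃ + l − m ≥ 0 and ν₃ − m ≥ 0 then d^{l,m} − d^{l+1,m−1} = (ν₃+l−m)+l+1; (c) if ν₃ + l − m ≤ 0 and ν₃ + l ≥ 0 then d^{l,m} − d^{l−1,m+1} = −2(ν₃+l−m)+1; (d) if ν₃ + l − m ≤ 0 and ν₃ + l ≤ 0 then d^{l,m} − d^{l−1,m+1} = −(ν₃+l−m)+m+1. -/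
import Mathlib


noncomputable section

/-- The quantity `d^{l,m} = deg(Y^{(l,m)}v_ν)` of Lemma 6.4 of the paper, for
`ν = (ν₁, ν₃)`. -/
def dlm (ν₁ ν₃ l m : ℤ) : ℚ :=
  (1 / 2 : ℚ) *
    (((ν₁ - ν₃ - l) * l + (ν₁ + ν₃ - m) * m + ν₁ - |ν₃| - |ν₁ - l - m| + |ν₃ + l - m|
      + ∑ i ∈ Finset.Icc 1 l, (|ν₁ - i + 1| - |ν₃ + l - i + 1|)
      + ∑ j ∈ Finset.Icc 1 m, (|ν₁ - j + 1| - |ν₃ - j|) : ℤ) : ℚ)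

lemma icc_succ (a b : ℤ) (h : a ≤ b + 1) :
    Finset.Icc a (b + 1) = insert (b + 1) (Finset.Icc a b) := by
  ext x; simp [Finset.mem_Icc]; omega

lemma sum_icc_succ (f : ℤ → ℤ) (a b : ℤ) (h : a ≤ b + 1) :
    ∑ i ∈ Finset.Icc a (b + 1), f i = (∑ i ∈ Finset.Icc a b, f i) + f (b + 1) := by
  rw [icc_succ a b h, Finset.sum_insert (by simp), add_comm]

lemma sum_icc_pred (f : ℤ → ℤ) (b : ℤ) (h : 1 ≤ b) :
    ∑ i ∈ Finset.Icc 1 b, f i = (∑ i ∈ Finset.Icc 1 (b - 1), f i) + f b := by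
  have h2 := sum_icc_succ f 1 (b - 1) (by omega)
  rw [sub_add_cancel] at h2
  exact h2

lemma sum_reflect (c l : ℤ) :
    ∑ i ∈ Finset.Icc 1 l, |c + l - i + 1| = ∑ k ∈ Finset.Icc 1 l, |c + k| := by
  apply Finset.sum_nbij' (fun i => l + 1 - i) (fun k => l + 1 - k)
  all_goals intros a ha
  all_goals simp_all [Finset.mem_Icc]
  all_goals try omega
  congr 1; ring

lemma dlm_eq (ν₁ ν₃ l m : ℤ) :
    dlm ν₁ ν₃ l m = (1 / 2 : ℚ) *
      (((ν₁ - ν₃ - l) * l + (ν₁ + ν₃ - m) * m + ν₁ - |ν₃| - |ν₁ - l - m| + |ν₃ + l - m|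
        + (∑ i ∈ Finset.Icc 1 l, |ν₁ - i + 1|) - (∑ k ∈ Finset.Icc 1 l, |ν₃ + k|)
        + (∑ j ∈ Finset.Icc 1 m, |ν₁ - j + 1|) - (∑ j ∈ Finset.Icc 1 m, |ν₃ - j|) : ℤ) : ℚ) := by
  unfold dlm
  congr 1
  norm_cast
  rw [Finset.sum_sub_distrib, Finset.sum_sub_distrib, sum_reflect]
  ring

lemma diff_up (ν₁ ν₃ l m : ℤ) (hl : 0 ≤ l) (hm : 1 ≤ m) :
    dlm ν₁ ν₃ l m - dlm ν₁ ν₃ (l + 1) (m - 1) =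
    (1 / 2 : ℚ) * (((ν₁ - ν₃ - l) * l - (ν₁ - ν₃ - (l + 1)) * (l + 1)
      + (ν₁ + ν₃ - m) * m - (ν₁ + ν₃ - (m - 1)) * (m - 1)
      + |ν₃ + l - m| - |ν₃ + l - m + 2| - |ν₁ - l| + |ν₃ + l + 1| + |ν₁ - m + 1| - |ν₃ - m| : ℤ) : ℚ) := by
  rw [dlm_eq, dlm_eq]
  rw [sum_icc_succ (fun i => |ν₁ - i + 1|) 1 l (by omega),
      sum_icc_succ (fun k => |ν₃ + k|) 1 l (by omega),
      sum_icc_pred (fun j => |ν₁ - j + 1|) m hm,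
      sum_icc_pred (fun j => |ν₃ - j|) m hm]
  simp only [show ν₃ + (l + 1) - (m - 1) = ν₃ + l - m + 2 from by ring,
    show ν₁ - (l + 1) - (m - 1) = ν₁ - l - m from by ring,
    show ν₁ - (l + 1) + 1 = ν₁ - l from by ring,
    show ν₃ + (l + 1) = ν₃ + l + 1 from by ring]
  rw [← mul_sub, ← Int.cast_sub]
  congr 1
  rw [Int.cast_inj]
  ring_nf
  try linarith

lemma diff_down (ν₁ ν₃ l m : ℤ) (hl : 1 ≤ l) (hm : 0 ≤ m) :
    dlm ν₁ ν₃ l m - dlm ν₁ ν₃ (l - 1) (m + 1) =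
    (1 / 2 : ℚ) * (((ν₁ - ν₃ - l) * l - (ν₁ - ν₃ - (l - 1)) * (l - 1)
      + (ν₁ + ν₃ - m) * m - (ν₁ + ν₃ - (m + 1)) * (m + 1)
      + |ν₃ + l - m| - |ν₃ + l - m - 2| + |ν₁ - l + 1| - |ν₃ + l| - |ν₁ - m| + |ν₃ - (m + 1)| : ℤ) : ℚ) := by
  rw [dlm_eq, dlm_eq]
  rw [sum_icc_succ (fun j => |ν₁ - j + 1|) 1 m (by omega),
      sum_icc_succ (fun j => |ν₃ - j|) 1 m (by omega),
      sum_icc_pred (fun i => |ν₁ - i + 1|) l hl,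
      sum_icc_pred (fun k => |ν₃ + k|) l hl]
  simp only [show ν₃ + (l - 1) - (m + 1) = ν₃ + l - m - 2 from by ring,
    show ν₁ - (l - 1) - (m + 1) = ν₁ - l - m from by ring,
    show ν₁ - (m + 1) + 1 = ν₁ - m from by ring]
  rw [← mul_sub, ← Int.cast_sub]
  congr 1
  rw [Int.cast_inj]
  ring_nf
  try linarith

/-- Lemma 6.4 of the paper: the explicit differences of the degrees `d^{l,m}`. -/
theorem statement12 (ν₁ ν₃ l m : ℤ) (hdom : |ν₃| ≤ ν₁)
    (hl0 : 0 ≤ l) (hl1 : l ≤ ν₁ - ν₃) (hm0 : 0 ≤ m) (hm1 : m ≤ ν₁ + ν₃)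
    (hlm : l + m ≤ ν₁) :
    ((0 ≤ ν₃ + l - m → l + 1 ≤ ν₁ - ν₃ → 1 ≤ m →
      (ν₃ - m ≤ 0 → dlm ν₁ ν₃ l m - dlm ν₁ ν₃ (l + 1) (m - 1) = 2 * (ν₃ + l - m) + 1) ∧
      (0 ≤ ν₃ - m → dlm ν₁ ν₃ l m - dlm ν₁ ν₃ (l + 1) (m - 1) = (ν₃ + l - m) + l + 1)) ∧
    (ν₃ + l - m ≤ 0 → 1 ≤ l → m + 1 ≤ ν₁ + ν₃ →
      (0 ≤ ν₃ + l → dlm ν₁ ν₃ l m - dlm ν₁ ν₃ (l - 1) (m + 1) = -2 * (ν₃ + l - m) + 1) ∧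
      (ν₃ + l ≤ 0 → dlm ν₁ ν₃ l m - dlm ν₁ ν₃ (l - 1) (m + 1) = -(ν₃ + l - m) + m + 1))) := by
  have habs : -ν₁ ≤ ν₃ ∧ ν₃ ≤ ν₁ := abs_le.mp hdom
  constructor
  · intro h1 h2 h3
    rw [diff_up ν₁ ν₃ l m hl0 h3] at *
    constructor
    · intro h4
      rw [abs_of_nonneg (by omega : (0:ℤ) ≤ ν₃ + l - m),
          abs_of_nonneg (by omega : (0:ℤ) ≤ ν₃ + l - m + 2),
          abs_of_nonneg (by omega : (0:ℤ) ≤ ν₁ - l),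
          abs_of_nonneg (by omega : (0:ℤ) ≤ ν₃ + l + 1),
          abs_of_nonneg (by omega : (0:ℤ) ≤ ν₁ - m + 1),
          abs_of_nonpos (by omega : ν₃ - m ≤ 0)]
      push_cast; ring
    · intro h4
      rw [abs_of_nonneg (by omega : (0:ℤ) ≤ ν₃ + l - m),
          abs_of_nonneg (by omega : (0:ℤ) ≤ ν₃ + l - m + 2),
          abs_of_nonneg (by omega : (0:ℤ) ≤ ν₁ - l),
          abs_of_nonneg (by omega : (0:ℤ) ≤ ν₃ + l + 1),
          abs_of_nonneg (by omega : (0:ℤ) ≤ ν₁ - m + 1),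
          abs_of_nonneg (by omega : (0:ℤ) ≤ ν₃ - m)]
      push_cast; ring
  · intro h1 h2 h3
    rw [diff_down ν₁ ν₃ l m h2 hm0] at *
    constructor
    · intro h4
      rw [abs_of_nonpos (by omega : ν₃ + l - m ≤ 0),
          abs_of_nonpos (by omega : ν₃ + l - m - 2 ≤ 0),
          abs_of_nonneg (by omega : (0:ℤ) ≤ ν₁ - l + 1),
          abs_of_nonneg (by omega : (0:ℤ) ≤ ν₃ + l),
          abs_of_nonneg (by omega : (0:ℤ) ≤ ν₁ - m),
          abs_of_nonpos (by omega : ν₃ - (m + 1) ≤ 0)]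
      push_cast; ring
    · intro h4
      rw [abs_of_nonpos (by omega : ν₃ + l - m ≤ 0),
          abs_of_nonpos (by omega : ν₃ + l - m - 2 ≤ 0),
          abs_of_nonneg (by omega : (0:ℤ) ≤ ν₁ - l + 1),
          abs_of_nonpos (by omega : ν₃ + l ≤ 0),
          abs_of_nonneg (by omega : (0:ℤ) ≤ ν₁ - m),
          abs_of_nonpos (by omega : ν₃ - (m + 1) ≤ 0)]
      push_cast; ring


end
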